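/- arXiv:1412.7557 — 3 statements merged into one kernel-verified Lean document; each statement's English description precedes it below -/
import Mathlib

section
/- Consider K independent homogeneous PPPs Φ_1,…,Φ_K on ℝ² with intensities λ_1,…,λ_K, representing BS tiers with powers P_k and path loss exponents α_k > 2. A user at the origin associates with the tier-ℓ BS maximizing P_k ‖x‖^{−α_k}. The probability that the user associates with tier ℓ is A_ℓ = 2π λ_ℓ ∫_0^∞ y exp(−π ∑_{k=1}^K λ_k (P_k/P_ℓ)^{2/α_k} y^{2α_ℓ/α_k}) dy. -/
open MeasureTheory ProbabilityTheory

private lemma rpow_sq' {a : ℝ} (ha : 0 ≤ a) (b : ℝ) : (a ^ b) ^ 2 = a ^ (2 * b) := by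
  rw [← Real.rpow_natCast (a ^ b) 2, ← Real.rpow_mul ha]
  norm_num [mul_comm]

private lemma exp_deriv_aux (c : ℝ) (y : ℝ) :
    HasDerivAt (fun y : ℝ => -Real.exp (-(Real.pi * c * y ^ 2)))
      (2 * Real.pi * c * y * Real.exp (-(Real.pi * c * y ^ 2))) y := by
  have h1 : HasDerivAt (fun y : ℝ => -(Real.pi * c * y ^ 2)) (-(Real.pi * c * (2 * y))) y := by
    have := ((hasDerivAt_pow 2 y).const_mul (Real.pi * c)).neg
    simp at this
    exact this
  have h3 := ((Real.hasDerivAt_exp _).comp y h1).neg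
  have h4 : HasDerivAt (fun y : ℝ => -Real.exp (-(Real.pi * c * y ^ 2)))
      (-(Real.exp (-(Real.pi * c * y ^ 2)) * -(Real.pi * c * (2 * y)))) y := h3
  convert h4 using 1
  ring

private lemma power_lt_iff' {Pk Pl αk αl x y : ℝ} (hPk : 0 < Pk) (hPl : 0 < Pl)
    (hαk : 0 < αk) (hx : 0 < x) (hy : 0 < y) :
    Pk * x ^ (-αk) < Pl * y ^ (-αl) ↔ (Pk / Pl) ^ (1 / αk) * y ^ (αl / αk) < x := by
  rw [Real.rpow_def_of_pos hx, Real.rpow_def_of_pos hy,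
    Real.rpow_def_of_pos (div_pos hPk hPl), Real.rpow_def_of_pos hy,
    ← Real.exp_add, ← Real.lt_log_iff_exp_lt hx, Real.log_div hPk.ne' hPl.ne']
  nth_rewrite 1 [← Real.exp_log hPk]
  nth_rewrite 1 [← Real.exp_log hPl]
  rw [← Real.exp_add, ← Real.exp_add, Real.exp_lt_exp]
  have heq : (Real.log Pk - Real.log Pl) * (1 / αk) + Real.log y * (αl / αk)
      = ((Real.log Pk - Real.log Pl) + Real.log y * αl) / αk := by ring
  rw [heq, div_lt_iff₀ hαk]
  constructor <;> intro h <;> nlinarith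

private lemma law_eq_density' {Ω : Type*} [MeasurableSpace Ω] (Pr : Measure Ω)
    [IsProbabilityMeasure Pr] (c : ℝ) (hc : 0 < c) {X : Ω → ℝ}
    (hX : Measurable X) (hpos : ∀ ω, 0 < X ω)
    (hdist : ∀ r : ℝ, 0 ≤ r →
      Pr {ω | r < X ω} = ENNReal.ofReal (Real.exp (-(Real.pi * c * r ^ 2)))) :
    Measure.map X Pr = (volume.restrict (Set.Ioi (0:ℝ))).withDensity
      (fun y => ENNReal.ofReal (2 * Real.pi * c * y * Real.exp (-(Real.pi * c * y ^ 2)))) := by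
  have hmap : IsProbabilityMeasure (Measure.map X Pr) := Measure.isProbabilityMeasure_map hX.aemeasurable
  have hcont : Continuous fun y : ℝ => 2 * Real.pi * c * y * Real.exp (-(Real.pi * c * y ^ 2)) := by
    continuity
  refine Measure.ext_of_Iic _ _ (fun a => ?_)
  rw [Measure.map_apply hX measurableSet_Iic,
    withDensity_apply _ measurableSet_Iic, Measure.restrict_restrict measurableSet_Iic]
  by_cases ha : 0 ≤ a
  · have hIic : Set.Iic a ∩ Set.Ioi 0 = Set.Ioc 0 a := by
      ext x; simp [and_comm]
    rw [hIic]
    have hint : IntegrableOn (fun y : ℝ => 2 * Real.pi * c * y * Real.exp (-(Real.pi * c * y ^ 2)))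
        (Set.Ioc 0 a) := hcont.integrableOn_Ioc
    have hnn : 0 ≤ᵐ[volume.restrict (Set.Ioc 0 a)]
        fun y : ℝ => 2 * Real.pi * c * y * Real.exp (-(Real.pi * c * y ^ 2)) := by
      filter_upwards [ae_restrict_mem measurableSet_Ioc] with y hy
      have : 0 < y := hy.1
      positivity
    rw [← ofReal_integral_eq_lintegral_ofReal hint hnn]
    have hFTC : ∫ y in Set.Ioc 0 a, 2 * Real.pi * c * y * Real.exp (-(Real.pi * c * y ^ 2))
        = 1 - Real.exp (-(Real.pi * c * a ^ 2)) := by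
      rw [← intervalIntegral.integral_of_le ha]
      rw [intervalIntegral.integral_eq_sub_of_hasDerivAt
        (f := fun y : ℝ => -Real.exp (-(Real.pi * c * y ^ 2)))
        (fun y _ => exp_deriv_aux c y) (hcont.intervalIntegrable 0 a)]
      norm_num
      ring
    rw [hFTC]
    have hset : X ⁻¹' Set.Iic a = {ω | a < X ω}ᶜ := by
      ext ω; simp [not_lt]
    have hms : MeasurableSet {ω | a < X ω} := hX measurableSet_Ioi
    rw [hset, measure_compl hms (measure_ne_top _ _), hdist a ha, measure_univ]
    rw [ENNReal.ofReal_sub _ (Real.exp_pos _).le, ENNReal.ofReal_one]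
  · push_neg at ha
    have h1 : X ⁻¹' Set.Iic a = ∅ := by
      ext ω; simp only [Set.mem_preimage, Set.mem_Iic, Set.mem_empty_iff_false, iff_false, not_le]
      exact lt_trans ha (hpos ω)
    have h2 : Set.Iic a ∩ Set.Ioi (0:ℝ) = ∅ := by
      ext x; simp only [Set.mem_inter_iff, Set.mem_Iic, Set.mem_Ioi, Set.mem_empty_iff_false,
        iff_false, not_and, not_lt]
      intro hx; linarith
    rw [h1, h2]
    simp

/-- in the `K`-tier PPP HetNet, the probability that the typical user at the
origin associates with tier `ℓ` (i.e., the nearest tier-`ℓ` BS maximizes the average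
received power `P_k ‖x‖^{-α_k}` over all tiers) equals
`A_ℓ = 2π λ_ℓ ∫_0^∞ y exp(−π ∑_k λ_k (P_k/P_ℓ)^{2/α_k} y^{2 α_ℓ/α_k}) dy`.
Here `R k` is the distance from the origin to the nearest tier-`k` BS, so that
`P(R k > r) = exp(−π λ_k r²)` and the `R k` are independent across tiers. -/
theorem tier_association_probability
    {Ω : Type*} [MeasurableSpace Ω] (Pr : Measure Ω) [IsProbabilityMeasure Pr]
    (K : ℕ) (hK : 0 < K) (lam P α : Fin K → ℝ)
    (hlam : ∀ k, 0 < lam k) (hP : ∀ k, 0 < P k) (hα : ∀ k, 2 < α k)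
    (R : Fin K → Ω → ℝ)
    (hRmeas : ∀ k, Measurable (R k))
    (hRpos : ∀ k ω, 0 < R k ω)
    (hRindep : iIndepFun R Pr)
    (hRdist : ∀ k, ∀ r : ℝ, 0 ≤ r →
      Pr {ω | r < R k ω} = ENNReal.ofReal (Real.exp (-(Real.pi * lam k * r ^ 2))))
    (ℓ : Fin K) :
    Pr {ω | ∀ k, k ≠ ℓ → P k * R k ω ^ (-(α k)) < P ℓ * R ℓ ω ^ (-(α ℓ))}
      = ENNReal.ofReal (2 * Real.pi * lam ℓ *
          ∫ y in Set.Ioi (0 : ℝ), y * Real.exp (-(Real.pi *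
            ∑ k, lam k * (P k / P ℓ) ^ (2 / α k) * y ^ (2 * α ℓ / α k)))) := by
  classical
  have hαpos : ∀ k, 0 < α k := fun k => lt_trans two_pos (hα k)
  set T : Finset (Fin K) := Finset.univ.erase ℓ with hT
  set g : Fin K → ℝ → ℝ := fun k y => (P k / P ℓ) ^ (1 / α k) * y ^ (α ℓ / α k) with hg
  have hgcont : ∀ k, Continuous (g k) := fun k =>
    continuous_const.mul (Real.continuous_rpow_const (le_of_lt (div_pos (hαpos ℓ) (hαpos k))))
  have hgpos : ∀ k (x : ℝ), 0 < x → 0 < g k x := fun k x hx =>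
    mul_pos (Real.rpow_pos_of_pos (div_pos (hP k) (hP ℓ)) _) (Real.rpow_pos_of_pos hx _)
  set X : Ω → ℝ := R ℓ with hX
  set Y : Ω → ({ k // k ∈ T } → ℝ) := fun ω i => R i ω with hYdef
  have hXm : Measurable X := hRmeas ℓ
  have hYm : Measurable Y := measurable_pi_lambda _ fun i => hRmeas i
  set E : Set (ℝ × ({k // k ∈ T} → ℝ)) := {p | ∀ i : {k // k ∈ T}, g i.1 p.1 < p.2 i} with hEdef
  have hEvent : {ω | ∀ k, k ≠ ℓ → P k * R k ω ^ (-(α k)) < P ℓ * R ℓ ω ^ (-(α ℓ))}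
      = (fun ω => (X ω, Y ω)) ⁻¹' E := by
    ext ω
    simp only [Set.mem_setOf_eq, Set.mem_preimage, hEdef]
    constructor
    · intro h i
      have hi : (i : Fin K) ≠ ℓ := Finset.ne_of_mem_erase i.2
      exact (power_lt_iff' (hP i) (hP ℓ) (hαpos i) (hRpos i ω) (hRpos ℓ ω)).mp (h i hi)
    · intro h k hk
      have hkT : k ∈ T := Finset.mem_erase.mpr ⟨hk, Finset.mem_univ k⟩
      exact (power_lt_iff' (hP k) (hP ℓ) (hαpos k) (hRpos k ω) (hRpos ℓ ω)).mpr (h ⟨k, hkT⟩)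
  have hEm : MeasurableSet E := by
    have hE2 : E = ⋂ i : {k // k ∈ T}, {p : ℝ × ({k // k ∈ T} → ℝ) | g i.1 p.1 < p.2 i} := by
      ext p; simp [hEdef]
    rw [hE2]
    exact MeasurableSet.iInter fun i => measurableSet_lt
      ((hgcont i.1).measurable.comp measurable_fst)
      ((measurable_pi_apply i).comp measurable_snd)
  have hXY : IndepFun X Y Pr := by
    have hdisj : Disjoint ({ℓ} : Finset (Fin K)) T := by
      rw [hT]; simp [Finset.disjoint_left]
    have h1 := hRindep.indepFun_finset {ℓ} T hdisj hRmeas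
    exact h1.comp (φ := fun v : ({k // k ∈ ({ℓ} : Finset (Fin K))} → ℝ) =>
      v ⟨ℓ, Finset.mem_singleton_self ℓ⟩) (ψ := id) (measurable_pi_apply _) measurable_id
  have hmapXY := (indepFun_iff_map_prod_eq_prod_map_map hXm.aemeasurable hYm.aemeasurable).mp hXY
  have hPY : IsProbabilityMeasure (Measure.map Y Pr) := Measure.isProbabilityMeasure_map hYm.aemeasurable
  rw [hEvent, ← Measure.map_apply (hXm.prodMk hYm) hEm, hmapXY, Measure.prod_apply hEm]
  set S : ℝ → ℝ := fun x => ∑ k ∈ T, lam k * ((P k / P ℓ) ^ (2 / α k) * x ^ (2 * α ℓ / α k))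
    with hS
  have hinner : ∀ x : ℝ, 0 < x →
      (Measure.map Y Pr) (Prod.mk x ⁻¹' E) = ENNReal.ofReal (Real.exp (-(Real.pi * S x))) := by
    intro x hx
    have hsl : MeasurableSet (Prod.mk x ⁻¹' E) := hEm.preimage measurable_prodMk_left
    rw [Measure.map_apply hYm hsl]
    have hset : Y ⁻¹' (Prod.mk x ⁻¹' E) = ⋂ k ∈ T, R k ⁻¹' Set.Ioi (g k x) := by
      ext ω
      simp only [Set.mem_preimage, Set.mem_setOf_eq, Set.mem_iInter, Set.mem_Ioi, hEdef, hYdef]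
      constructor
      · intro h k hk; exact h ⟨k, hk⟩
      · intro h i; exact h i i.2
    rw [hset, hRindep.measure_inter_preimage_eq_mul T
      (sets := fun k => Set.Ioi (g k x)) (fun k _ => measurableSet_Ioi)]
    have hterm : ∀ k ∈ T, Pr (R k ⁻¹' Set.Ioi (g k x))
        = ENNReal.ofReal (Real.exp
            (-(Real.pi * (lam k * ((P k / P ℓ) ^ (2 / α k) * x ^ (2 * α ℓ / α k)))))) := by
      intro k hk
      have h1 : Pr {ω | g k x < R k ω}
          = ENNReal.ofReal (Real.exp (-(Real.pi * lam k * (g k x) ^ 2))) :=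
        hRdist k (g k x) (hgpos k x hx).le
      have h2 : (g k x) ^ 2 = (P k / P ℓ) ^ (2 / α k) * x ^ (2 * α ℓ / α k) := by
        rw [hg]
        rw [mul_pow, rpow_sq' (div_nonneg (hP k).le (hP ℓ).le), rpow_sq' hx.le]
        rw [show 2 * (1 / α k) = 2 / α k by ring, show 2 * (α ℓ / α k) = 2 * α ℓ / α k by ring]
      have h3 : R k ⁻¹' Set.Ioi (g k x) = {ω | g k x < R k ω} := rfl
      rw [h3, h1, h2, mul_assoc]
    rw [Finset.prod_congr rfl hterm,
      ← ENNReal.ofReal_prod_of_nonneg (fun i _ => (Real.exp_pos _).le)]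
    congr 1
    rw [← Real.exp_sum]
    congr 1
    rw [hS, Finset.mul_sum, ← Finset.sum_neg_distrib]
  have haepos : ∀ᵐ x ∂(Measure.map X Pr), 0 < x := by
    rw [ae_iff]
    have hms : MeasurableSet {x : ℝ | ¬ (0:ℝ) < x} := by
      simp only [not_lt]
      exact measurableSet_Iic
    rw [Measure.map_apply hXm hms]
    have hempty : X ⁻¹' {x : ℝ | ¬ (0:ℝ) < x} = ∅ := by
      ext ω
      simp only [Set.mem_preimage, Set.mem_setOf_eq, not_lt, Set.mem_empty_iff_false,
        iff_false, not_le]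
      exact hRpos ℓ ω
    rw [hempty]
    simp
  have hstep1 : ∫⁻ x, (Measure.map Y Pr) (Prod.mk x ⁻¹' E) ∂(Measure.map X Pr)
      = ∫⁻ x, ENNReal.ofReal (Real.exp (-(Real.pi * S x))) ∂(Measure.map X Pr) := by
    refine lintegral_congr_ae ?_
    filter_upwards [haepos] with x hx
    exact hinner x hx
  rw [hstep1, law_eq_density' Pr (lam ℓ) (hlam ℓ) hXm (hRpos ℓ) (hRdist ℓ)]
  have hScont : Continuous S := by
    refine continuous_finset_sum _ fun k _ => ?_
    exact continuous_const.mul (continuous_const.mul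
      (Real.continuous_rpow_const (div_pos (mul_pos two_pos (hαpos ℓ)) (hαpos k)).le))
  have hSm : Measurable fun x : ℝ => ENNReal.ofReal (Real.exp (-(Real.pi * S x))) :=
    ((Real.continuous_exp.comp (continuous_const.mul hScont).neg).measurable).ennreal_ofReal
  have hDcont : Continuous fun y : ℝ =>
      2 * Real.pi * lam ℓ * y * Real.exp (-(Real.pi * lam ℓ * y ^ 2)) :=
    (continuous_const.mul continuous_id).mul
      (Real.continuous_exp.comp (continuous_const.mul (continuous_pow 2)).neg)
  rw [lintegral_withDensity_eq_lintegral_mul _ hDcont.measurable.ennreal_ofReal hSm]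
  -- pointwise rewriting on Ioi 0
  set W : ℝ → ℝ := fun x => ∑ k, lam k * (P k / P ℓ) ^ (2 / α k) * x ^ (2 * α ℓ / α k)
    with hW
  have htermℓ : ∀ x : ℝ, 0 < x →
      lam ℓ * (P ℓ / P ℓ) ^ (2 / α ℓ) * x ^ (2 * α ℓ / α ℓ) = lam ℓ * x ^ 2 := by
    intro x hx
    rw [div_self (hP ℓ).ne', Real.one_rpow,
      show 2 * α ℓ / α ℓ = (2:ℝ) by rw [mul_div_assoc, div_self (hαpos ℓ).ne', mul_one],
      show ((2:ℝ)) = ((2:ℕ):ℝ) by norm_num, Real.rpow_natCast]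
    ring
  have hsum : ∀ x : ℝ, 0 < x →
      Real.pi * lam ℓ * x ^ 2 + Real.pi * S x = Real.pi * W x := by
    intro x hx
    have h4 : lam ℓ * (P ℓ / P ℓ) ^ (2 / α ℓ) * x ^ (2 * α ℓ / α ℓ)
        + ∑ k ∈ Finset.univ.erase ℓ, lam k * (P k / P ℓ) ^ (2 / α k) * x ^ (2 * α ℓ / α k)
        = ∑ k, lam k * (P k / P ℓ) ^ (2 / α k) * x ^ (2 * α ℓ / α k) :=
      Finset.add_sum_erase Finset.univ
        (fun k => lam k * (P k / P ℓ) ^ (2 / α k) * x ^ (2 * α ℓ / α k)) (Finset.mem_univ ℓ)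
    simp only [hS, hW, hT]
    rw [← h4, htermℓ x hx]
    have h5 : ∑ k ∈ Finset.univ.erase ℓ, lam k * ((P k / P ℓ) ^ (2 / α k) * x ^ (2 * α ℓ / α k))
        = ∑ k ∈ Finset.univ.erase ℓ, lam k * (P k / P ℓ) ^ (2 / α k) * x ^ (2 * α ℓ / α k) :=
      Finset.sum_congr rfl fun k _ => (mul_assoc _ _ _).symm
    rw [h5]
    ring
  have hnnterms : ∀ x : ℝ, 0 < x → ∀ k,
      0 ≤ lam k * (P k / P ℓ) ^ (2 / α k) * x ^ (2 * α ℓ / α k) := by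
    intro x hx k
    have h1 : (0:ℝ) ≤ (P k / P ℓ) ^ (2 / α k) :=
      Real.rpow_nonneg (div_nonneg (hP k).le (hP ℓ).le) _
    have h2 : (0:ℝ) ≤ x ^ (2 * α ℓ / α k) := Real.rpow_nonneg hx.le _
    exact mul_nonneg (mul_nonneg (hlam k).le h1) h2
  have hstep2 : ∫⁻ x in Set.Ioi (0:ℝ),
      ((fun y => ENNReal.ofReal (2 * Real.pi * lam ℓ * y * Real.exp (-(Real.pi * lam ℓ * y ^ 2))))
        * fun x => ENNReal.ofReal (Real.exp (-(Real.pi * S x)))) x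
      = ∫⁻ x in Set.Ioi (0:ℝ),
          ENNReal.ofReal (2 * Real.pi * lam ℓ * (x * Real.exp (-(Real.pi * W x)))) := by
    refine setLIntegral_congr_fun measurableSet_Ioi (fun x hx => ?_)
    have hx : (0:ℝ) < x := hx
    simp only [Pi.mul_apply]
    rw [← ENNReal.ofReal_mul (mul_nonneg (mul_nonneg (mul_nonneg
      (by positivity : (0:ℝ) ≤ 2 * Real.pi) (hlam ℓ).le) hx.le) (Real.exp_pos _).le)]
    congr 1
    rw [show 2 * Real.pi * lam ℓ * x * Real.exp (-(Real.pi * lam ℓ * x ^ 2))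
          * Real.exp (-(Real.pi * S x))
        = 2 * Real.pi * lam ℓ * (x * (Real.exp (-(Real.pi * lam ℓ * x ^ 2))
          * Real.exp (-(Real.pi * S x)))) by ring, ← Real.exp_add,
      show -(Real.pi * lam ℓ * x ^ 2) + -(Real.pi * S x) = -(Real.pi * W x) by
        rw [← hsum x hx]; ring]
  rw [hstep2]
  -- integrability
  have hWcont : Continuous W := by
    refine continuous_finset_sum _ fun k _ => ?_
    exact continuous_const.mul
      (Real.continuous_rpow_const (div_pos (mul_pos two_pos (hαpos ℓ)) (hαpos k)).le)
  have hfcont : Continuous fun x : ℝ => x * Real.exp (-(Real.pi * W x)) :=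
    continuous_id.mul (Real.continuous_exp.comp (continuous_const.mul hWcont).neg)
  have hbase : IntegrableOn (fun x : ℝ => x * Real.exp (-(Real.pi * W x))) (Set.Ioi 0) := by
    refine Integrable.mono'
      ((integrable_mul_exp_neg_mul_sq (mul_pos Real.pi_pos (hlam ℓ))).integrableOn)
      hfcont.aestronglyMeasurable ?_
    filter_upwards [ae_restrict_mem measurableSet_Ioi] with x hx
    have hx : (0:ℝ) < x := hx
    have hle : lam ℓ * x ^ 2 ≤ W x := by
      have h6 : lam ℓ * (P ℓ / P ℓ) ^ (2 / α ℓ) * x ^ (2 * α ℓ / α ℓ)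
          ≤ ∑ k, lam k * (P k / P ℓ) ^ (2 / α k) * x ^ (2 * α ℓ / α k) :=
        Finset.single_le_sum (f := fun k =>
          lam k * (P k / P ℓ) ^ (2 / α k) * x ^ (2 * α ℓ / α k))
          (fun k _ => hnnterms x hx k) (Finset.mem_univ ℓ)
      rw [htermℓ x hx] at h6
      exact h6
    rw [Real.norm_eq_abs, abs_of_nonneg (by positivity)]
    have hexp : Real.exp (-(Real.pi * W x)) ≤ Real.exp (-(Real.pi * lam ℓ * x ^ 2)) := by
      apply Real.exp_le_exp.mpr
      have := mul_le_mul_of_nonneg_left hle Real.pi_pos.le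
      nlinarith
    calc x * Real.exp (-(Real.pi * W x)) ≤ x * Real.exp (-(Real.pi * lam ℓ * x ^ 2)) :=
          mul_le_mul_of_nonneg_left hexp hx.le
      _ = x * Real.exp (-(Real.pi * lam ℓ) * x ^ 2) := by ring_nf
  have hint : IntegrableOn
      (fun x : ℝ => 2 * Real.pi * lam ℓ * (x * Real.exp (-(Real.pi * W x)))) (Set.Ioi 0) :=
    hbase.const_mul _
  have hnn : 0 ≤ᵐ[volume.restrict (Set.Ioi (0:ℝ))]
      fun x : ℝ => 2 * Real.pi * lam ℓ * (x * Real.exp (-(Real.pi * W x))) := by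
    filter_upwards [ae_restrict_mem measurableSet_Ioi] with x hx
    have hx : (0:ℝ) < x := hx
    have := (hlam ℓ)
    positivity
  rw [← ofReal_integral_eq_lintegral_ofReal hint hnn]
  congr 1
  rw [integral_const_mul]
end

section
/- In the K-tier PPP model, conditioned on the user associating with tier ℓ, the distance y to the serving BS has probability density f(y) = (2π λ_ℓ y / A_ℓ) exp(−π ∑_{k=1}^K λ_k (P_k/P_ℓ)^{2/α_k} y^{2α_ℓ/α_k}) for y ≥ 0, where A_ℓ is the tier-ℓ association probability. -/
open MeasureTheory ProbabilityTheory
open scoped ENNReal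
open scoped ENNReal

lemma hasDerivAt_negexp (c y : ℝ) :
    HasDerivAt (fun y : ℝ => -Real.exp (-(c * y ^ 2))) (2 * c * y * Real.exp (-(c * y ^ 2))) y := by
  have h1 : HasDerivAt (fun y : ℝ => -(c * y ^ 2)) (-(c * (2 * y))) y := by
    have h0 : HasDerivAt (fun y : ℝ => -(c * y ^ 2)) (-(c * (((2:ℕ):ℝ) * y ^ (2 - 1)))) y :=
      ((hasDerivAt_pow 2 y).const_mul c).neg
    simpa using h0
  have h3 : HasDerivAt (fun y : ℝ => -Real.exp (-(c * y ^ 2)))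
      (-(Real.exp (-(c * y ^ 2)) * -(c * (2 * y)))) y := h1.exp.neg
  convert h3 using 1
  ring

lemma ftc_exp_sq (c : ℝ) {a b : ℝ} (hab : a ≤ b) :
    ∫ y in Set.Ioc a b, 2 * c * y * Real.exp (-(c * y ^ 2))
      = Real.exp (-(c * a ^ 2)) - Real.exp (-(c * b ^ 2)) := by
  rw [← intervalIntegral.integral_of_le hab]
  have hcont : Continuous fun y : ℝ => 2 * c * y * Real.exp (-(c * y ^ 2)) := by fun_prop
  have := intervalIntegral.integral_eq_sub_of_hasDerivAt
    (f := fun y : ℝ => -Real.exp (-(c * y ^ 2)))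
    (fun y _ => hasDerivAt_negexp c y) (hcont.intervalIntegrable a b)
  rw [this]; ring

lemma map_eq_withDensity {Ω : Type*} [MeasurableSpace Ω] (Pr : Measure Ω)
    [IsProbabilityMeasure Pr] (l : ℝ) (hl : 0 < l) (X : Ω → ℝ) (hX : Measurable X)
    (hXpos : ∀ ω, 0 < X ω)
    (hdist : ∀ r : ℝ, 0 ≤ r → Pr {ω | r < X ω} = ENNReal.ofReal (Real.exp (-(Real.pi * l * r ^ 2)))) :
    Pr.map X = (volume.restrict (Set.Ioi 0)).withDensity
      (fun y => ENNReal.ofReal (2 * (Real.pi * l) * y * Real.exp (-(Real.pi * l * y ^ 2)))) := by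
  haveI : IsProbabilityMeasure (Pr.map X) := Measure.isProbabilityMeasure_map hX.aemeasurable
  refine Measure.ext_of_Iic _ _ (fun r => ?_)
  rw [Measure.map_apply hX measurableSet_Iic, withDensity_apply _ measurableSet_Iic,
    Measure.restrict_restrict measurableSet_Iic, Set.inter_comm, Set.Ioi_inter_Iic]
  rcases lt_or_ge r 0 with hr | hr
  · have h1 : X ⁻¹' Set.Iic r = ∅ := by
      ext ω; simp only [Set.mem_preimage, Set.mem_Iic, Set.mem_empty_iff_false, iff_false, not_le]
      exact hr.trans (hXpos ω)
    rw [h1, Set.Ioc_eq_empty (by exact fun h => absurd (h.trans hr) (lt_irrefl 0))]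
    simp
  · have hcompl : X ⁻¹' Set.Iic r = {ω | r < X ω}ᶜ := by
      ext ω; simp [not_lt]
    have hms : MeasurableSet {ω | r < X ω} := hX measurableSet_Ioi
    rw [hcompl, measure_compl hms (measure_ne_top _ _), hdist r hr, measure_univ]
    have hint : IntegrableOn (fun y => 2 * (Real.pi * l) * y * Real.exp (-(Real.pi * l * y ^ 2)))
        (Set.Ioc 0 r) volume := by
      apply Continuous.integrableOn_Ioc
      fun_prop
    have hnn : 0 ≤ᵐ[volume.restrict (Set.Ioc 0 r)]
        (fun y => 2 * (Real.pi * l) * y * Real.exp (-(Real.pi * l * y ^ 2))) := by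
      refine (ae_restrict_iff' measurableSet_Ioc).2 (ae_of_all _ fun y hy => ?_)
      have hy0 : 0 ≤ y := hy.1.le
      have h2 : 0 ≤ 2 * (Real.pi * l) := by positivity
      exact mul_nonneg (mul_nonneg h2 hy0) (Real.exp_pos _).le
    rw [← ofReal_integral_eq_lintegral_ofReal hint hnn, ftc_exp_sq (Real.pi * l) hr]
    have he1 : Real.exp (-(Real.pi * l * 0 ^ 2)) = 1 := by norm_num
    have he2 : Real.exp (-(Real.pi * l * r ^ 2)) ≤ 1 := by
      rw [Real.exp_le_one_iff]
      have : 0 ≤ Real.pi * l * r ^ 2 := by positivity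
      linarith
    rw [he1, ENNReal.ofReal_sub _ (Real.exp_pos _).le]
    simp

lemma aux_iff {Pk Pl αk αl y z : ℝ} (hPk : 0 < Pk) (hPl : 0 < Pl) (hαk : 0 < αk)
    (hy : 0 < y) (hz : 0 < z) :
    Pk * z ^ (-αk) < Pl * y ^ (-αl) ↔ ((Pk / Pl) * y ^ αl) ^ αk⁻¹ < z := by
  have hzk : 0 < z ^ αk := Real.rpow_pos_of_pos hz _
  have hyl : 0 < y ^ αl := Real.rpow_pos_of_pos hy _
  have hb : 0 ≤ (Pk / Pl) * y ^ αl := mul_nonneg (div_nonneg hPk.le hPl.le) hyl.le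
  have key : Pk * z ^ (-αk) < Pl * y ^ (-αl) ↔ (Pk / Pl) * y ^ αl < z ^ αk := by
    rw [Real.rpow_neg hz.le, Real.rpow_neg hy.le, ← div_eq_mul_inv, ← div_eq_mul_inv,
      div_lt_div_iff₀ hzk hyl, div_mul_eq_mul_div, div_lt_iff₀ hPl, mul_comm (z ^ αk) Pl]
  rw [key]
  have h2 := Real.rpow_lt_rpow_iff (Real.rpow_nonneg hb αk⁻¹) hz.le hαk
  rw [Real.rpow_inv_rpow hb hαk.ne'] at h2
  exact h2

lemma aux_sq {Pk Pl αk αl y : ℝ} (hPk : 0 ≤ Pk) (hPl : 0 ≤ Pl) (hαk : αk ≠ 0) (hy : 0 ≤ y) :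
    (((Pk / Pl) * y ^ αl) ^ αk⁻¹) ^ 2 = (Pk / Pl) ^ (2 / αk) * y ^ (2 * αl / αk) := by
  have hb : 0 ≤ (Pk / Pl) * y ^ αl := mul_nonneg (div_nonneg hPk hPl) (Real.rpow_nonneg hy _)
  rw [← Real.rpow_two, ← Real.rpow_mul hb,
    Real.mul_rpow (div_nonneg hPk hPl) (Real.rpow_nonneg hy _), ← Real.rpow_mul hy]
  rw [show αk⁻¹ * 2 = 2 / αk by ring, show αl * (2 / αk) = 2 * αl / αk by ring]


/-- in the `K`-tier PPP HetNet, conditioned on the user associating with tier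
`ℓ`, the serving distance `R ℓ` has density
`f(y) = (2π λ_ℓ y / A_ℓ) exp(−π ∑_k λ_k (P_k/P_ℓ)^{2/α_k} y^{2 α_ℓ/α_k})`, `y ≥ 0`.
Equivalently (multiplying by the association probability `A_ℓ`), for every `t ≥ 0` the joint
probability of associating with tier `ℓ` and the serving distance being at most `t` equals
`2π λ_ℓ ∫_0^t y exp(−π ∑_k λ_k (P_k/P_ℓ)^{2/α_k} y^{2 α_ℓ/α_k}) dy`. -/
theorem serving_distance_conditional_density
    {Ω : Type*} [MeasurableSpace Ω] (Pr : Measure Ω) [IsProbabilityMeasure Pr]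
    (K : ℕ) (hK : 0 < K) (lam P α : Fin K → ℝ)
    (hlam : ∀ k, 0 < lam k) (hP : ∀ k, 0 < P k) (hα : ∀ k, 2 < α k)
    (R : Fin K → Ω → ℝ)
    (hRmeas : ∀ k, Measurable (R k))
    (hRpos : ∀ k ω, 0 < R k ω)
    (hRindep : iIndepFun R Pr)
    (hRdist : ∀ k, ∀ r : ℝ, 0 ≤ r →
      Pr {ω | r < R k ω} = ENNReal.ofReal (Real.exp (-(Real.pi * lam k * r ^ 2))))
    (ℓ : Fin K) (t : ℝ) (ht : 0 ≤ t) :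
    Pr {ω | (∀ k, k ≠ ℓ → P k * R k ω ^ (-(α k)) < P ℓ * R ℓ ω ^ (-(α ℓ))) ∧ R ℓ ω ≤ t}
      = ENNReal.ofReal (2 * Real.pi * lam ℓ *
          ∫ y in Set.Ioc (0 : ℝ) t, y * Real.exp (-(Real.pi *
            ∑ k, lam k * (P k / P ℓ) ^ (2 / α k) * y ^ (2 * α ℓ / α k)))) := by
  classical
  have hlm : (0:ℝ) ≤ 2 * Real.pi * lam ℓ :=
    mul_nonneg (mul_nonneg (by norm_num) Real.pi_pos.le) (hlam ℓ).le
  have hlm2 : (0:ℝ) ≤ 2 * (Real.pi * lam ℓ) :=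
    mul_nonneg (by norm_num) (mul_nonneg Real.pi_pos.le (hlam ℓ).le)
  have hα0 : ∀ k, (0:ℝ) < α k := fun k => lt_trans two_pos (hα k)
  set E : Finset (Fin K) := Finset.univ.erase ℓ with hE
  set g : Ω → ({x // x ∈ E} → ℝ) := fun ω j => R j.1 ω with hgdef
  have hg : Measurable g := measurable_pi_lambda _ fun j => hRmeas _
  have hind : IndepFun (R ℓ) g Pr := by
    have hdisj : Disjoint ({ℓ} : Finset (Fin K)) E := by
      simp [hE, Finset.disjoint_singleton_left]
    have h0 := hRindep.indepFun_finset {ℓ} E hdisj hRmeas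
    have h1 := h0.comp
      (φ := fun x : ({ℓ} : Finset (Fin K)) → ℝ => x ⟨ℓ, Finset.mem_singleton_self ℓ⟩)
      (ψ := id) (measurable_pi_apply (X := fun _ : ({ℓ} : Finset (Fin K)) => ℝ) (⟨ℓ, Finset.mem_singleton_self ℓ⟩ : ({ℓ} : Finset (Fin K)))) measurable_id
    exact h1
  haveI hprob2 : IsProbabilityMeasure (Pr.map g) := Measure.isProbabilityMeasure_map hg.aemeasurable
  haveI : IsProbabilityMeasure (Pr.map (R ℓ)) := Measure.isProbabilityMeasure_map (hRmeas ℓ).aemeasurable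
  -- the set in the product space
  set T : Set (ℝ × ({x // x ∈ E} → ℝ)) :=
    {p | (∀ j : {x // x ∈ E}, P j.1 * p.2 j ^ (-(α j.1)) < P ℓ * p.1 ^ (-(α ℓ))) ∧ p.1 ≤ t}
    with hT
  have hTmeas : MeasurableSet T := by
    rw [hT, Set.setOf_and]
    refine MeasurableSet.inter ?_ (measurableSet_le measurable_fst measurable_const)
    rw [Set.setOf_forall]
    exact MeasurableSet.iInter fun j => measurableSet_lt (by fun_prop) (by fun_prop)
  have hevent :
      {ω | (∀ k, k ≠ ℓ → P k * R k ω ^ (-(α k)) < P ℓ * R ℓ ω ^ (-(α ℓ))) ∧ R ℓ ω ≤ t}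
        = (fun ω => (R ℓ ω, g ω)) ⁻¹' T := by
    ext ω
    simp only [hT, hgdef, Set.mem_setOf_eq, Set.mem_preimage]
    constructor
    · rintro ⟨h1, h2⟩
      exact ⟨fun j => h1 j.1 (Finset.ne_of_mem_erase j.2), h2⟩
    · rintro ⟨h1, h2⟩
      exact ⟨fun k hk => h1 ⟨k, Finset.mem_erase.2 ⟨hk, Finset.mem_univ k⟩⟩, h2⟩
  -- the slice measure
  have hH : ∀ y ∈ Set.Ioc (0:ℝ) t, (Pr.map g) (Prod.mk y ⁻¹' T)
      = ENNReal.ofReal (Real.exp (-(Real.pi *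
          ∑ k ∈ E, lam k * (P k / P ℓ) ^ (2 / α k) * y ^ (2 * α ℓ / α k)))) := by
    intro y hy
    have hyT : Prod.mk y ⁻¹' T
        = {z : {x // x ∈ E} → ℝ | ∀ j, P j.1 * z j ^ (-(α j.1)) < P ℓ * y ^ (-(α ℓ))} := by
      ext z
      simp [hT, hy.2]
    have hms2 : MeasurableSet
        {z : {x // x ∈ E} → ℝ | ∀ j, P j.1 * z j ^ (-(α j.1)) < P ℓ * y ^ (-(α ℓ))} := by
      rw [Set.setOf_forall]
      exact MeasurableSet.iInter fun j => measurableSet_lt (by fun_prop) measurable_const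
    rw [hyT, Measure.map_apply hg hms2]
    have hpre : g ⁻¹' {z : {x // x ∈ E} → ℝ | ∀ j, P j.1 * z j ^ (-(α j.1)) < P ℓ * y ^ (-(α ℓ))}
        = ⋂ k ∈ E, R k ⁻¹' Set.Ioi (((P k / P ℓ) * y ^ (α ℓ)) ^ (α k)⁻¹) := by
      ext ω
      simp only [hgdef, Set.mem_preimage, Set.mem_setOf_eq, Set.mem_iInter, Set.mem_Ioi]
      constructor
      · intro h k hk
        exact (aux_iff (hP k) (hP ℓ) (hα0 k) hy.1 (hRpos k ω)).1 (h ⟨k, hk⟩)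
      · intro h j
        exact (aux_iff (hP j.1) (hP ℓ) (hα0 j.1) hy.1 (hRpos j.1 ω)).2 (h j.1 j.2)
    rw [hpre, hRindep.measure_inter_preimage_eq_mul E (fun k _ => measurableSet_Ioi)]
    have hterm : ∀ k ∈ E, Pr (R k ⁻¹' Set.Ioi (((P k / P ℓ) * y ^ (α ℓ)) ^ (α k)⁻¹))
        = ENNReal.ofReal (Real.exp
            (-(Real.pi * (lam k * (P k / P ℓ) ^ (2 / α k) * y ^ (2 * α ℓ / α k))))) := by
      intro k _
      have hc : 0 ≤ ((P k / P ℓ) * y ^ (α ℓ)) ^ (α k)⁻¹ :=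
        Real.rpow_nonneg (mul_nonneg (div_nonneg (hP k).le (hP ℓ).le)
          (Real.rpow_nonneg hy.1.le _)) _
      have := hRdist k _ hc
      rw [show {ω | ((P k / P ℓ) * y ^ (α ℓ)) ^ (α k)⁻¹ < R k ω}
          = R k ⁻¹' Set.Ioi (((P k / P ℓ) * y ^ (α ℓ)) ^ (α k)⁻¹) from rfl] at this
      rw [this]
      congr 2
      rw [aux_sq (hP k).le (hP ℓ).le (hα0 k).ne' hy.1.le]
      ring
    rw [Finset.prod_congr rfl hterm,
      ← ENNReal.ofReal_prod_of_nonneg (fun k _ => (Real.exp_pos _).le), ← Real.exp_sum]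
    congr 2
    rw [Finset.mul_sum, ← Finset.sum_neg_distrib]
  
  rw [hevent, ← Measure.map_apply ((hRmeas ℓ).prodMk hg) hTmeas,
    (indepFun_iff_map_prod_eq_prod_map_map (hRmeas ℓ).aemeasurable hg.aemeasurable).1 hind,
    Measure.prod_apply hTmeas,
    map_eq_withDensity Pr (lam ℓ) (hlam ℓ) (R ℓ) (hRmeas ℓ) (hRpos ℓ) (hRdist ℓ),
    lintegral_withDensity_eq_lintegral_mul_non_measurable _ (by fun_prop)
      (ae_of_all _ fun y => ENNReal.ofReal_lt_top),
    ← Set.Ioc_union_Ioi_eq_Ioi ht,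
    lintegral_union measurableSet_Ioi (Set.Ioc_disjoint_Ioi le_rfl)]
  have hzero : (∫⁻ y in Set.Ioi t,
      ((fun y => ENNReal.ofReal (2 * (Real.pi * lam ℓ) * y *
          Real.exp (-(Real.pi * lam ℓ * y ^ 2)))) *
        (fun y => (Pr.map g) (Prod.mk y ⁻¹' T))) y) = 0 := by
    have hfz : ∀ y ∈ Set.Ioi t,
        ((fun y => ENNReal.ofReal (2 * (Real.pi * lam ℓ) * y *
            Real.exp (-(Real.pi * lam ℓ * y ^ 2)))) *
          (fun y => (Pr.map g) (Prod.mk y ⁻¹' T))) y = 0 := by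
      intro y hy
      have hTempty : Prod.mk y ⁻¹' T = (∅ : Set ({x // x ∈ E} → ℝ)) := by
        ext z
        simp only [hT, Set.mem_preimage, Set.mem_setOf_eq, Set.mem_empty_iff_false, iff_false,
          not_and]
        exact fun _ => not_le.mpr hy
      simp only [Pi.mul_apply]
      rw [hTempty]
      simp
    rw [setLIntegral_congr_fun (g := fun _ => (0:ℝ≥0∞)) measurableSet_Ioi hfz,
      lintegral_zero]
  rw [hzero, add_zero]
  have hmain : ∀ y ∈ Set.Ioc (0:ℝ) t,
      ((fun y => ENNReal.ofReal (2 * (Real.pi * lam ℓ) * y *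
          Real.exp (-(Real.pi * lam ℓ * y ^ 2)))) *
        (fun y => (Pr.map g) (Prod.mk y ⁻¹' T))) y
      = ENNReal.ofReal (2 * Real.pi * lam ℓ * (y * Real.exp (-(Real.pi *
          ∑ k, lam k * (P k / P ℓ) ^ (2 / α k) * y ^ (2 * α ℓ / α k))))) := by
    intro y hy
    simp only [Pi.mul_apply]
    rw [hH y hy, ← ENNReal.ofReal_mul (mul_nonneg (mul_nonneg hlm2 hy.1.le)
      (Real.exp_pos _).le)]
    congr 1
    have hsum : Real.pi * (∑ k, lam k * (P k / P ℓ) ^ (2 / α k) * y ^ (2 * α ℓ / α k))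
        = Real.pi * lam ℓ * y ^ 2
          + Real.pi * ∑ k ∈ E, lam k * (P k / P ℓ) ^ (2 / α k) * y ^ (2 * α ℓ / α k) := by
      rw [← Finset.add_sum_erase Finset.univ _ (Finset.mem_univ ℓ)]
      have hℓterm : lam ℓ * (P ℓ / P ℓ) ^ (2 / α ℓ) * y ^ (2 * α ℓ / α ℓ) = lam ℓ * y ^ 2 := by
        rw [div_self (hP ℓ).ne', Real.one_rpow, mul_one,
          show 2 * α ℓ / α ℓ = (2:ℝ) by rw [mul_div_assoc, div_self (hα0 ℓ).ne', mul_one], Real.rpow_two]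
      rw [hℓterm, ← hE]
      ring
    rw [show -(Real.pi * ∑ k, lam k * (P k / P ℓ) ^ (2 / α k) * y ^ (2 * α ℓ / α k))
        = -(Real.pi * lam ℓ * y ^ 2) + -(Real.pi *
            ∑ k ∈ E, lam k * (P k / P ℓ) ^ (2 / α k) * y ^ (2 * α ℓ / α k)) by
          rw [hsum]; ring,
      Real.exp_add]
    ring
  rw [setLIntegral_congr_fun measurableSet_Ioc hmain]
  have hint : IntegrableOn (fun y => 2 * Real.pi * lam ℓ * (y * Real.exp (-(Real.pi *
      ∑ k, lam k * (P k / P ℓ) ^ (2 / α k) * y ^ (2 * α ℓ / α k))))) (Set.Ioc 0 t) volume := by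
    apply Measure.integrableOn_of_bounded (M := 2 * Real.pi * lam ℓ * t) measure_Ioc_lt_top.ne
    · apply Measurable.aestronglyMeasurable
      have hsum_meas : Measurable fun y : ℝ =>
          ∑ k, lam k * (P k / P ℓ) ^ (2 / α k) * y ^ (2 * α ℓ / α k) :=
        Finset.measurable_sum _ fun k _ => by fun_prop
      fun_prop
    · filter_upwards [ae_restrict_mem measurableSet_Ioc] with y hy
      have hynn : 0 ≤ y := hy.1.le
      have hS : 0 ≤ ∑ k, lam k * (P k / P ℓ) ^ (2 / α k) * y ^ (2 * α ℓ / α k) :=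
        Finset.sum_nonneg fun k _ => mul_nonneg (mul_nonneg (hlam k).le
          (Real.rpow_nonneg (div_nonneg (hP k).le (hP ℓ).le) _)) (Real.rpow_nonneg hynn _)
      have he : Real.exp (-(Real.pi *
          ∑ k, lam k * (P k / P ℓ) ^ (2 / α k) * y ^ (2 * α ℓ / α k))) ≤ 1 := by
        rw [Real.exp_le_one_iff]
        nlinarith [Real.pi_pos]
      rw [Real.norm_eq_abs, abs_of_nonneg (mul_nonneg hlm
        (mul_nonneg hynn (Real.exp_pos _).le))]
      calc 2 * Real.pi * lam ℓ * (y * Real.exp (-(Real.pi *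
            ∑ k, lam k * (P k / P ℓ) ^ (2 / α k) * y ^ (2 * α ℓ / α k))))
          ≤ 2 * Real.pi * lam ℓ * (t * 1) := by
            have h1 : 0 ≤ 2 * Real.pi * lam ℓ := hlm
            have h2 : y * Real.exp (-(Real.pi *
                ∑ k, lam k * (P k / P ℓ) ^ (2 / α k) * y ^ (2 * α ℓ / α k))) ≤ t * 1 :=
              mul_le_mul hy.2 he (Real.exp_pos _).le ht
            exact mul_le_mul_of_nonneg_left h2 h1
        _ = 2 * Real.pi * lam ℓ * t := by ring
  have hnn : 0 ≤ᵐ[volume.restrict (Set.Ioc (0:ℝ) t)] (fun y => 2 * Real.pi * lam ℓ *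
      (y * Real.exp (-(Real.pi *
        ∑ k, lam k * (P k / P ℓ) ^ (2 / α k) * y ^ (2 * α ℓ / α k))))) := by
    filter_upwards [ae_restrict_mem measurableSet_Ioc] with y hy
    exact mul_nonneg hlm (mul_nonneg hy.1.le (Real.exp_pos _).le)
  rw [← ofReal_integral_eq_lintegral_ofReal hint hnn, ← MeasureTheory.integral_const_mul]
end

section
/- In the K-tier PPP HetNet with equal path loss exponents α_k ≡ α > 2 and equal number of active Tx antennas S_k ≡ S, the variance of the normalized per-antenna interference I_n' = I_n / (P_ℓ y^{−α}) at the typical user, averaged over the serving tier and serving distance, equals (1 + 1/S)/(α − 1), independent of K and of the densities λ_k and powers P_k. -/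
open MeasureTheory

lemma cube_exp_integral {c : ℝ} (hc : 0 < c) :
    ∫ y in Set.Ioi (0 : ℝ), y ^ 3 * Real.exp (-(c * y ^ 2)) = 1 / (2 * c ^ 2) := by
  have h := integral_rpow_mul_exp_neg_mul_rpow (p := 2) (q := 3) (b := c)
    (by norm_num) (by norm_num) hc
  have heq : ∫ y in Set.Ioi (0 : ℝ), y ^ 3 * Real.exp (-(c * y ^ 2))
      = ∫ x in Set.Ioi (0 : ℝ), x ^ (3 : ℝ) * Real.exp (-c * x ^ (2 : ℝ)) := by
    refine setIntegral_congr_fun measurableSet_Ioi (fun x hx => ?_)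
    have hx0 : (0 : ℝ) ≤ x := le_of_lt hx
    rw [← Real.rpow_natCast x 3, ← Real.rpow_natCast x 2]
    push_cast
    ring_nf
  rw [heq, h]
  have : ((3 : ℝ) + 1) / 2 = 2 := by norm_num
  rw [this, Real.Gamma_two]
  rw [show (-((3 : ℝ) + 1) / 2) = -(2 : ℝ) by norm_num, Real.rpow_neg hc.le,
    show ((2 : ℝ)) = ((2 : ℕ) : ℝ) by norm_num, Real.rpow_natCast]
  field_simp

/-- with equal path loss exponents `α_k ≡ α > 2` and equal numbers of active
Tx antennas `S_k ≡ S`, de-conditioning the conditional variance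
`Var_{ℓ,y}[I'] = π ∑_k λ_k (P_k/P_ℓ)^{2/α} (1+1/S) y²/(α−1)` of the normalized per-antenna
interference against the serving-distance density over all tiers yields
`Var[I'] = (1 + 1/S)/(α − 1)`, independent of `K` and of the `λ_k` and `P_k`. -/
theorem normalized_interference_variance
    (K : ℕ) (hK : 0 < K) (lam P : Fin K → ℝ) (α : ℝ) (S : ℕ)
    (hlam : ∀ k, 0 < lam k) (hP : ∀ k, 0 < P k) (hα : 2 < α) (hS : 0 < S) :
    ∑ ℓ, 2 * Real.pi * lam ℓ *
      ∫ y in Set.Ioi (0 : ℝ),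
        y * (Real.pi * (∑ k, lam k * (P k / P ℓ) ^ (2 / α)) * (1 + 1 / (S : ℝ))
              * y ^ 2 / (α - 1))
          * Real.exp (-(Real.pi * (∑ k, lam k * (P k / P ℓ) ^ (2 / α)) * y ^ 2))
      = (1 + 1 / (S : ℝ)) / (α - 1) := by
  set B : ℝ := 1 + 1 / (S : ℝ) with hB
  set T : ℝ := ∑ k, lam k * (P k) ^ (2 / α) with hT
  have : Nonempty (Fin K) := Fin.pos_iff_nonempty.mp hK
  have hTpos : 0 < T := by
    refine Finset.sum_pos (fun k _ => ?_) Finset.univ_nonempty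
    exact mul_pos (hlam k) (Real.rpow_pos_of_pos (hP k) _)
  have hsum : ∀ ℓ : Fin K, (∑ k, lam k * (P k / P ℓ) ^ (2 / α))
      = T / (P ℓ) ^ (2 / α) := by
    intro ℓ
    rw [hT, Finset.sum_div]
    refine Finset.sum_congr rfl (fun k _ => ?_)
    rw [Real.div_rpow (le_of_lt (hP k)) (le_of_lt (hP ℓ))]
    ring
  have key : ∀ ℓ : Fin K,
      2 * Real.pi * lam ℓ *
        ∫ y in Set.Ioi (0 : ℝ),
          y * (Real.pi * (∑ k, lam k * (P k / P ℓ) ^ (2 / α)) * B * y ^ 2 / (α - 1))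
            * Real.exp (-(Real.pi * (∑ k, lam k * (P k / P ℓ) ^ (2 / α)) * y ^ 2))
      = lam ℓ * (P ℓ) ^ (2 / α) / T * (B / (α - 1)) := by
    intro ℓ
    set c : ℝ := Real.pi * (∑ k, lam k * (P k / P ℓ) ^ (2 / α)) with hc
    have hcpos : 0 < c := by
      rw [hc, hsum ℓ]
      exact mul_pos Real.pi_pos (div_pos hTpos (Real.rpow_pos_of_pos (hP ℓ) _))
    have hint : (∫ y in Set.Ioi (0 : ℝ),
        y * (c * B * y ^ 2 / (α - 1)) * Real.exp (-(c * y ^ 2)))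
        = (c * B / (α - 1)) * ∫ y in Set.Ioi (0 : ℝ), y ^ 3 * Real.exp (-(c * y ^ 2)) := by
      rw [← MeasureTheory.integral_const_mul]
      refine setIntegral_congr_fun measurableSet_Ioi (fun y hy => ?_)
      ring
    rw [hint, cube_exp_integral hcpos]
    have hα1 : (0:ℝ) < α - 1 := by linarith
    have hPl : (0:ℝ) < (P ℓ) ^ (2 / α) := Real.rpow_pos_of_pos (hP ℓ) _
    rw [hc, hsum ℓ]
    field_simp
  rw [Finset.sum_congr rfl (fun ℓ _ => key ℓ), ← Finset.sum_mul, ← Finset.sum_div, ← hT,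
    div_self (ne_of_gt hTpos), one_mul]
end
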